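/- arXiv:2006.11846 — 3 statements merged into one kernel-verified Lean document; each statement's English description precedes it below -/
import Mathlib

section
/- The adjugate (classical adjoint) of the Jacobian matrix of M_μ admits the separated representation adj(D M_μ(x)) = ψ²(μ)·I₂ + ψ¹(μ)·(1/‖x‖³)·[[x₁², x₁x₂], [x₁x₂, x₂²]] for every x = (x₁,x₂) ≠ 0, where I₂ is the 2×2 identity matrix. -/
/-- Parametric function `ψ¹(μ) = R_out(μ−1)/(R_out−1)` of the Couette geometric mapping. -/
noncomputable def couettePsi1 (Rout μ : ℝ) : ℝ := Rout * (μ - 1) / (Rout - 1)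

/-- Parametric function `ψ²(μ) = (R_out−μ)/(R_out−1)` of the Couette geometric mapping. -/
noncomputable def couettePsi2 (Rout μ : ℝ) : ℝ := (Rout - μ) / (Rout - 1)

/-- The Couette geometric mapping `M_μ(x) = (ψ¹(μ)/‖x‖)·x + ψ²(μ)·x`. -/
noncomputable def couetteMap (Rout μ : ℝ) (x : EuclideanSpace ℝ (Fin 2)) :
    EuclideanSpace ℝ (Fin 2) :=
  (couettePsi1 Rout μ / ‖x‖) • x + couettePsi2 Rout μ • x

/-- The Jacobian matrix of the Couette geometric mapping at `x`: the 2×2 matrix of the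
Fréchet derivative of `M_μ` at `x`. -/
noncomputable def couetteJacobian (Rout μ : ℝ) (x : EuclideanSpace ℝ (Fin 2)) :
    Matrix (Fin 2) (Fin 2) ℝ :=
  Matrix.of fun i j => fderiv ℝ (couetteMap Rout μ) x (EuclideanSpace.single j 1) i

/-! The derivative of `y ↦ ‖y‖⁻¹ • y` is `‖x‖⁻¹ • I - ‖x‖⁻³ • x xᵀ`, so the Jacobian of `M_μ` is a
scalar matrix plus a rank-one matrix. In dimension two,
`adj (c • I + d • u vᵀ) = (c + d (v ⬝ u)) • I - d • u vᵀ`, and with `x ⬝ x = ‖x‖²` the scalar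
part collapses to `ψ²(μ)`. -/

open Matrix

lemma hasFDerivAt_norm {E : Type*} [NormedAddCommGroup E] [InnerProductSpace ℝ E]
    {x : E} (hx : x ≠ 0) :
    HasFDerivAt (fun y : E => ‖y‖) (‖x‖⁻¹ • innerSL ℝ x) x := by
  have hsqrt := (hasStrictFDerivAt_norm_sq x).hasFDerivAt.sqrt (by positivity)
  simp only [Real.sqrt_sq (norm_nonneg _)] at hsqrt
  convert hsqrt using 1
  rw [two_smul, ← two_smul ℝ, smul_smul]
  congr 1
  field_simp

lemma hasFDerivAt_inv_norm_smul {E : Type*} [NormedAddCommGroup E] [InnerProductSpace ℝ E]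
    {x : E} (hx : x ≠ 0) :
    HasFDerivAt (fun y : E => ‖y‖⁻¹ • y)
      (‖x‖⁻¹ • ContinuousLinearMap.id ℝ E - (‖x‖ ^ 3)⁻¹ • (innerSL ℝ x).smulRight x) x := by
  have hx0 : ‖x‖ ≠ 0 := norm_ne_zero_iff.mpr hx
  have hinv := (hasDerivAt_inv hx0).comp_hasFDerivAt x (hasFDerivAt_norm hx)
  refine (hinv.smul (hasFDerivAt_id x)).congr_fderiv ?_
  ext v
  simp only [_root_.sub_apply, _root_.add_apply, _root_.smul_apply,
    ContinuousLinearMap.smulRight_apply, ContinuousLinearMap.id_apply, Function.comp_apply, id_eq,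
    innerSL_apply_apply, smul_smul, smul_eq_mul]
  rw [sub_eq_add_neg, ← neg_smul]
  congr 2
  ring

lemma adjugate_fin_two_smul_one_add_vecMulVec {R : Type*} [CommRing R] (c d : R)
    (u v : Fin 2 → R) :
    adjugate (c • (1 : Matrix (Fin 2) (Fin 2) R) + d • vecMulVec u v) =
      (c + d * (v ⬝ᵥ u)) • 1 - d • vecMulVec u v := by
  rw [adjugate_fin_two]
  ext i j
  fin_cases i <;> fin_cases j <;> simp [vecMulVec_apply, dotProduct, Fin.sum_univ_two] <;> ring

lemma hasFDerivAt_couetteMap (Rout μ : ℝ) {x : EuclideanSpace ℝ (Fin 2)} (hx : x ≠ 0) :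
    HasFDerivAt (couetteMap Rout μ)
      (couettePsi1 Rout μ • (‖x‖⁻¹ • ContinuousLinearMap.id ℝ _ -
          (‖x‖ ^ 3)⁻¹ • (innerSL ℝ x).smulRight x) +
        couettePsi2 Rout μ • ContinuousLinearMap.id ℝ _) x := by
  have hM := ((hasFDerivAt_inv_norm_smul hx).const_smul (couettePsi1 Rout μ)).add
    ((hasFDerivAt_id x).const_smul (couettePsi2 Rout μ))
  have hmap : couetteMap Rout μ =
      fun y => couettePsi1 Rout μ • (‖y‖⁻¹ • y) + couettePsi2 Rout μ • y := by
    funext y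
    rw [couetteMap, div_eq_mul_inv, mul_smul]
  rw [hmap]
  exact hM

lemma couetteJacobian_eq (Rout μ : ℝ) {x : EuclideanSpace ℝ (Fin 2)} (hx : x ≠ 0) :
    couetteJacobian Rout μ x =
      (couettePsi1 Rout μ / ‖x‖ + couettePsi2 Rout μ) • 1 +
        (-(couettePsi1 Rout μ / ‖x‖ ^ 3)) • vecMulVec x x := by
  ext i j
  simp [couetteJacobian, (hasFDerivAt_couetteMap Rout μ hx).fderiv, vecMulVec_apply, one_apply,
    EuclideanSpace.inner_single_right]
  split_ifs <;> ring

theorem couetteJacobian_adjugate_general (Rout μ : ℝ) (x : EuclideanSpace ℝ (Fin 2)) (hx : x ≠ 0) :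
    (couetteJacobian Rout μ x).adjugate =
      couettePsi2 Rout μ • (1 : Matrix (Fin 2) (Fin 2) ℝ) +
        couettePsi1 Rout μ •
          ((1 / ‖x‖ ^ 3) • (Matrix.of ![![x 0 ^ 2, x 0 * x 1], ![x 0 * x 1, x 1 ^ 2]] : Matrix (Fin 2) (Fin 2) ℝ)) := by
  have hnorm : (x : Fin 2 → ℝ) ⬝ᵥ x = ‖x‖ ^ 2 := by
    rw [← real_inner_self_eq_norm_sq, EuclideanSpace.inner_eq_star_dotProduct, star_trivial]
  have hvv : vecMulVec x x = of ![![x 0 ^ 2, x 0 * x 1], ![x 0 * x 1, x 1 ^ 2]] := by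
    ext i j
    fin_cases i <;> fin_cases j <;> simp [vecMulVec_apply, sq, mul_comm]
  have hcoeff : couettePsi1 Rout μ / ‖x‖ + couettePsi2 Rout μ +
      -(couettePsi1 Rout μ / ‖x‖ ^ 3) * ‖x‖ ^ 2 = couettePsi2 Rout μ := by
    field_simp
    ring
  rw [couetteJacobian_eq Rout μ hx, adjugate_fin_two_smul_one_add_vecMulVec, hnorm, hcoeff, hvv]
  module

/-- The adjugate of the Jacobian of `M_μ` admits the separated representation
`adj(D M_μ(x)) = ψ²(μ)·I₂ + ψ¹(μ)·(1/‖x‖³)·[[x₁², x₁x₂], [x₁x₂, x₂²]]` for `x ≠ 0`. -/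
theorem couetteJacobian_adjugate (Rout μ : ℝ) (hRout : 1 < Rout)
    (hμ₁ : 1 ≤ μ) (hμ₂ : μ < Rout) (x : EuclideanSpace ℝ (Fin 2)) (hx : x ≠ 0) :
    (couetteJacobian Rout μ x).adjugate =
      couettePsi2 Rout μ • (1 : Matrix (Fin 2) (Fin 2) ℝ) +
        couettePsi1 Rout μ •
          ((1 / ‖x‖ ^ 3) • (Matrix.of ![![x 0 ^ 2, x 0 * x 1], ![x 0 * x 1, x 1 ^ 2]] : Matrix (Fin 2) (Fin 2) ℝ)) :=
  couetteJacobian_adjugate_general Rout μ x hx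
end

section
/- The velocity field u of the Stokes flow past a sphere is divergence-free away from the origin: for every x ∈ ℝ³ with x ≠ 0, u is differentiable at x and ∂u₁/∂x₁(x) + ∂u₂/∂x₂(x) + ∂u₃/∂x₃(x) = 0. -/
/-!
Write `r = ‖x‖`. The velocity is `v∞ e₁ - (3Rv∞/4) S - (R³v∞/4) D` with the Stokeslet
`S = e₁/r + x₁ x/r³` and the potential dipole `D = e₁/r³ - 3x₁ x/r⁵`. Both have the shape
`a rᵏ eⱼ + b xⱼ rᵏ⁻² x`, whose divergence on `ℝⁿ ∖ {0}` is `(a k + b (n + k - 1)) xⱼ rᵏ⁻²`: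
`div (φ c) = ∂_c φ`, `div (φ x) = x · ∇φ + n φ`, and `x · ∇φ = (k - 1) φ` by Euler's identity for
the homogeneous `φ = xⱼ rᵏ⁻²`. The coefficient vanishes for `(k, a, b) = (-1, 1, 1)` and
`(-3, 1, -3)`.
-/

/-- The velocity field of the analytical Stokes flow past a sphere of radius `R` in a
uniform stream of speed `v∞` (Cartesian form). -/
noncomputable def stokesSphereVelocity (R v : ℝ) (x : EuclideanSpace ℝ (Fin 3)) :
    EuclideanSpace ℝ (Fin 3) :=
  v • EuclideanSpace.single (0 : Fin 3) (1 : ℝ) -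
    (3 * R * v / 4) • ((1 / ‖x‖) • EuclideanSpace.single (0 : Fin 3) (1 : ℝ) +
      (x 0 / ‖x‖ ^ 3) • x) -
    (R ^ 3 * v / 4) • ((1 / ‖x‖ ^ 3) • EuclideanSpace.single (0 : Fin 3) (1 : ℝ) -
      (3 * x 0 / ‖x‖ ^ 5) • x)

/-- The pressure field of the analytical Stokes flow past a sphere of radius `R` in a
uniform stream of speed `v∞`, kinematic viscosity `ν` and far-field pressure `pinf`. -/
noncomputable def stokesSpherePressure (R ν v pinf : ℝ) (x : EuclideanSpace ℝ (Fin 3)) : ℝ :=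
  pinf - (3 * ν * R * v / 2) * x 0 / ‖x‖ ^ 3

section NormZPow

variable {F : Type*} [NormedAddCommGroup F] [InnerProductSpace ℝ F] {x : F}

theorem hasFDerivAt_norm_of_ne_zero (hx : x ≠ 0) :
    HasFDerivAt (‖·‖) (‖x‖⁻¹ • innerSL ℝ x) x := by
  have hsqrt := (hasStrictFDerivAt_norm_sq x).hasFDerivAt.sqrt (by positivity)
  simp only [Real.sqrt_sq (norm_nonneg _)] at hsqrt
  convert hsqrt using 1
  ext y
  simp only [smul_apply, coe_innerSL_apply, smul_eq_mul, one_div, mul_inv_rev, nsmul_eq_mul,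
    Nat.cast_ofNat]
  field_simp

theorem hasFDerivAt_norm_zpow (hx : x ≠ 0) (k : ℤ) :
    HasFDerivAt (fun y : F => ‖y‖ ^ k) ((k * ‖x‖ ^ (k - 2)) • innerSL ℝ x) x := by
  have hx' : ‖x‖ ≠ 0 := norm_ne_zero_iff.mpr hx
  refine ((hasDerivAt_zpow k ‖x‖ (.inl hx')).comp_hasFDerivAt x
    (hasFDerivAt_norm_of_ne_zero hx)).congr_fderiv ?_
  rw [smul_smul, mul_assoc, ← zpow_neg_one, ← zpow_add₀ hx']
  ring_nf

end NormZPow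

section Divergence

variable {ι : Type*} [Fintype ι] [DecidableEq ι]

noncomputable def divergence (f : EuclideanSpace ℝ ι → EuclideanSpace ℝ ι)
    (x : EuclideanSpace ℝ ι) : ℝ :=
  ∑ i, fderiv ℝ f x (EuclideanSpace.single i 1) i

theorem ContinuousLinearMap.sum_apply_single_mul (L : EuclideanSpace ℝ ι →L[ℝ] ℝ)
    (c : EuclideanSpace ℝ ι) : ∑ i, L (EuclideanSpace.single i 1) * c i = L c := by
  conv_rhs => rw [← (EuclideanSpace.basisFun ι ℝ).sum_repr c]
  simp [mul_comm]

variable {f g : EuclideanSpace ℝ ι → EuclideanSpace ℝ ι} {x : EuclideanSpace ℝ ι}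

theorem divergence_const (c : EuclideanSpace ℝ ι) : divergence (fun _ => c) x = 0 := by
  simp [divergence]

theorem divergence_sub (hf : DifferentiableAt ℝ f x) (hg : DifferentiableAt ℝ g x) :
    divergence (fun y => f y - g y) x = divergence f x - divergence g x := by
  simp [divergence, fderiv_fun_sub hf hg, Finset.sum_sub_distrib]

theorem divergence_add (hf : DifferentiableAt ℝ f x) (hg : DifferentiableAt ℝ g x) :
    divergence (fun y => f y + g y) x = divergence f x + divergence g x := by
  simp [divergence, fderiv_fun_add hf hg, Finset.sum_add_distrib]

theorem divergence_const_smul (hf : DifferentiableAt ℝ f x) (a : ℝ) :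
    divergence (fun y => a • f y) x = a * divergence f x := by
  simp [divergence, fderiv_fun_const_smul hf, Finset.mul_sum]

theorem divergence_smul_const {φ : EuclideanSpace ℝ ι → ℝ} (hφ : DifferentiableAt ℝ φ x)
    (c : EuclideanSpace ℝ ι) : divergence (fun y => φ y • c) x = fderiv ℝ φ x c := by
  simp [divergence, fderiv_smul_const hφ, ContinuousLinearMap.sum_apply_single_mul]

theorem divergence_smul_self {φ : EuclideanSpace ℝ ι → ℝ} (hφ : DifferentiableAt ℝ φ x) :
    divergence (fun y => φ y • y) x = fderiv ℝ φ x x + Fintype.card ι * φ x := by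
  simp [divergence, fderiv_fun_smul hφ differentiableAt_fun_id, Finset.sum_add_distrib,
    ContinuousLinearMap.sum_apply_single_mul, add_comm]

theorem divergence_norm_zpow_smul_single (hx : x ≠ 0) (k : ℤ) (j : ι) :
    divergence (fun y => ‖y‖ ^ k • EuclideanSpace.single j (1 : ℝ)) x =
      k * (x j * ‖x‖ ^ (k - 2)) := by
  have h := hasFDerivAt_norm_zpow hx k
  rw [divergence_smul_const h.differentiableAt, h.fderiv]
  simp only [smul_apply, coe_innerSL_apply, EuclideanSpace.inner_single_right, Real.ringHom_apply,
    one_mul, smul_eq_mul]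
  ring

theorem divergence_coord_mul_norm_zpow_smul_self (hx : x ≠ 0) (k : ℤ) (j : ι) :
    divergence (fun y => (y j * ‖y‖ ^ k) • y) x = (Fintype.card ι + k + 1) * (x j * ‖x‖ ^ k) := by
  have hx' : ‖x‖ ≠ 0 := norm_ne_zero_iff.mpr hx
  have h : HasFDerivAt (fun y : EuclideanSpace ℝ ι => y j * ‖y‖ ^ k) _ x :=
    (EuclideanSpace.proj j).hasFDerivAt.fun_mul (hasFDerivAt_norm_zpow hx k)
  rw [divergence_smul_self h.differentiableAt, h.fderiv]
  have hpow : ‖x‖ ^ (k - 2) * ‖x‖ ^ 2 = ‖x‖ ^ k := by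
    rw [← zpow_natCast, ← zpow_add₀ hx']
    norm_num
  simp only [PiLp.proj_apply, add_apply, smul_apply, coe_innerSL_apply, inner_self_eq_norm_sq_to_K,
    Real.ringHom_apply, smul_eq_mul]
  linear_combination x j * k * hpow

noncomputable def axisymmetricField (j : ι) (k : ℤ) (a b : ℝ) (y : EuclideanSpace ℝ ι) :
    EuclideanSpace ℝ ι :=
  a • (‖y‖ ^ k • EuclideanSpace.single j 1) + b • ((y j * ‖y‖ ^ (k - 2)) • y)

theorem differentiableAt_axisymmetricField (hx : x ≠ 0) (j : ι) (k : ℤ) (a b : ℝ) :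
    DifferentiableAt ℝ (axisymmetricField j k a b) x := by
  have hnorm : ∀ m : ℤ, DifferentiableAt ℝ (fun y : EuclideanSpace ℝ ι => ‖y‖ ^ m) x :=
    fun m => (hasFDerivAt_norm_zpow hx m).differentiableAt
  unfold axisymmetricField
  fun_prop

theorem divergence_axisymmetricField (hx : x ≠ 0) (j : ι) (k : ℤ) (a b : ℝ) :
    divergence (axisymmetricField j k a b) x =
      (a * k + b * (Fintype.card ι + k - 1)) * (x j * ‖x‖ ^ (k - 2)) := by
  have hnorm : ∀ m : ℤ, DifferentiableAt ℝ (fun y : EuclideanSpace ℝ ι => ‖y‖ ^ m) x :=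
    fun m => (hasFDerivAt_norm_zpow hx m).differentiableAt
  unfold axisymmetricField
  rw [divergence_add (by fun_prop) (by fun_prop), divergence_const_smul (by fun_prop),
    divergence_const_smul (by fun_prop), divergence_norm_zpow_smul_single hx,
    divergence_coord_mul_norm_zpow_smul_self hx]
  push_cast
  ring

end Divergence

theorem stokesSphereVelocity_eq_axisymmetricField (R v : ℝ) :
    stokesSphereVelocity R v = fun y => v • EuclideanSpace.single 0 1 -
      (3 * R * v / 4) • axisymmetricField 0 (-1) 1 1 y -
      (R ^ 3 * v / 4) • axisymmetricField 0 (-3) 1 (-3) y := by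
  funext y
  simp only [stokesSphereVelocity, axisymmetricField, Int.reduceNeg, Int.reduceSub, zpow_neg, zpow_ofNat, div_eq_mul_inv]
  module

theorem stokesSphereVelocity_div_free_general (R v : ℝ)
    (x : EuclideanSpace ℝ (Fin 3)) (hx : x ≠ 0) :
    DifferentiableAt ℝ (stokesSphereVelocity R v) x ∧
      fderiv ℝ (stokesSphereVelocity R v) x (EuclideanSpace.single 0 1) 0 +
        fderiv ℝ (stokesSphereVelocity R v) x (EuclideanSpace.single 1 1) 1 +
        fderiv ℝ (stokesSphereVelocity R v) x (EuclideanSpace.single 2 1) 2 = 0 := by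
  have hstokeslet := differentiableAt_axisymmetricField hx 0 (-1) 1 1
  have hdipole := differentiableAt_axisymmetricField hx 0 (-3) 1 (-3)
  rw [stokesSphereVelocity_eq_axisymmetricField]
  refine ⟨by fun_prop, ?_⟩
  calc _ = divergence (fun y => v • EuclideanSpace.single 0 1 -
        (3 * R * v / 4) • axisymmetricField 0 (-1) 1 1 y -
        (R ^ 3 * v / 4) • axisymmetricField 0 (-3) 1 (-3) y) x := by
          simp only [divergence, Fin.sum_univ_three]
    _ = 0 := by
      rw [divergence_sub (by fun_prop) (by fun_prop), divergence_sub (by fun_prop) (by fun_prop),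
        divergence_const, divergence_const_smul hstokeslet, divergence_const_smul hdipole,
        divergence_axisymmetricField hx, divergence_axisymmetricField hx]
      norm_num

/-- The velocity field of the Stokes flow past a sphere is divergence-free away from the
origin: for every `x ≠ 0`, `u` is differentiable at `x` and
`∂u₁/∂x₁(x) + ∂u₂/∂x₂(x) + ∂u₃/∂x₃(x) = 0`. -/
theorem stokesSphereVelocity_div_free (R v : ℝ) (hR : 0 < R)
    (x : EuclideanSpace ℝ (Fin 3)) (hx : x ≠ 0) :
    DifferentiableAt ℝ (stokesSphereVelocity R v) x ∧
      fderiv ℝ (stokesSphereVelocity R v) x (EuclideanSpace.single 0 1) 0 +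
        fderiv ℝ (stokesSphereVelocity R v) x (EuclideanSpace.single 1 1) 1 +
        fderiv ℝ (stokesSphereVelocity R v) x (EuclideanSpace.single 2 1) 2 = 0 :=
  stokesSphereVelocity_div_free_general R v x hx
end

section
/- The velocity field u of the Stokes flow past a sphere satisfies the no-slip boundary condition on the surface of the sphere: u(x) = 0 for every x ∈ ℝ³ with ‖x‖ = R. -/
/-- The velocity field of the Stokes flow past a sphere satisfies the no-slip boundary
condition on the surface of the sphere: `u(x) = 0` whenever `‖x‖ = R`. -/
theorem stokesSphereVelocity_no_slip (R v : ℝ) (hR : 0 < R)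
    (x : EuclideanSpace ℝ (Fin 3)) (hx : ‖x‖ = R) :
    stokesSphereVelocity R v x = 0 := by
  have hR' : R ≠ 0 := hR.ne'
  unfold stokesSphereVelocity
  rw [hx]
  match_scalars <;> field_simp <;> ring
end
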